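/- Let a < b be real numbers, I = [a,b], and let y, z : I × ℝ → ℂ be measurable such that for almost every t ∈ I the functions y(t,·) and z(t,·) are differentiable on ℝ. Then ∫_I ‖z(t)·conj(y(t))‖_{W^{1,2}(ℝ)} dt ≤ (b−a)^{3/4} · ( 2 · (∫_I ‖z(t)‖_{W^{1,∞}(ℝ)}⁴ dt)^{1/4} · ess sup_{t∈I} ‖y(t)‖_{L²(ℝ)} + (∫_I ‖y(t)‖_{W^{1,∞}(ℝ)}⁴ dt)^{1/4} · ess sup_{t∈I} ‖z(t)‖_{L²(ℝ)} ), as an inequality of extended nonnegative reals. (Persistence-of-regularity estimate in d = 1: the H¹ norm of the product is controlled using only the L² norms of the factors in time-sup, which underlies Theorem 5.7/5.8 removing the extra noise assumption.) -/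

import Mathlib

open MeasureTheory Filter
open scoped ENNReal

/-- Sobolev `W^{1,p}` norm of a function `f : ℝ → ℂ`:
`‖f‖_{W^{1,p}} = ‖f‖_{L^p} + ‖∇f‖_{L^p}`, valued in `[0,∞]`. -/
noncomputable def W1NormR (p : ℝ≥0∞) (f : ℝ → ℂ) : ℝ≥0∞ :=
  eLpNorm f p (volume : Measure ℝ) + eLpNorm (fderiv ℝ f) p (volume : Measure ℝ)

/-!
Pointwise in time, the Leibniz rule and Hölder's inequality (`L^∞ × L²`) give
`‖z conj y‖_{W^{1,2}} ≤ ‖z‖_{W^{1,∞}} ‖y‖_{L²} + ‖y‖_{W^{1,∞}} ‖z‖_{L²}`; bounding the `L²` norms by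
their essential suprema in time and applying Hölder in time with exponents `4` and `4/3` produces
the factor `(b - a)^{3/4}`.

The delicate point is the measurability in `t` of `‖z(t)‖_{W^{1,∞}}`. For a differentiable `g`,
`ess sup |g|` is the supremum of `|g|` over the rationals, and `ess sup |g'|` is the best Lipschitz
constant of `g` (mean value bound one way, fundamental theorem of calculus the other), i.e. the
supremum of the difference quotients of `g` over pairs of rationals. Both are countable suprema
of measurable functions of `t`.
-/

open scoped NNReal

theorem Continuous.eLpNormEssSup_eq_iSup_comp_denseRange {ι X E : Type*} [TopologicalSpace X]
    [MeasurableSpace X] {μ : Measure X} [μ.IsOpenPosMeasure] [NormedAddCommGroup E] {g : X → E}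
    (hg : Continuous g) {e : ι → X} (he : DenseRange e) :
    eLpNormEssSup g μ = ⨆ i, ‖g (e i)‖ₑ := by
  have hclosed : ∀ C, IsClosed {x | ‖g x‖ₑ ≤ C} := fun C =>
    isClosed_le hg.enorm continuous_const
  apply le_antisymm
  · refine eLpNormEssSup_le_of_ae_enorm_bound (Eventually.of_forall fun x => ?_)
    exact he.induction_on x (hclosed _) fun i => le_iSup (fun i => ‖g (e i)‖ₑ) i
  · refine iSup_le fun i => ?_
    have h := (Measure.dense_of_ae (enorm_ae_le_eLpNormEssSup g μ)).closure_eq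
    rw [(hclosed _).closure_eq] at h
    exact Set.eq_univ_iff_forall.mp h (e i)

theorem lipschitzWith_iff_iSup_edist_div_le {ι X Y : Type*} [PseudoMetricSpace X]
    [PseudoEMetricSpace Y] {g : X → Y} (hg : Continuous g) {e : ι → X} (he : DenseRange e)
    {K : ℝ≥0} :
    LipschitzWith K g ↔ ⨆ i, ⨆ j, edist (g (e i)) (g (e j)) / edist (e i) (e j) ≤ K := by
  refine ⟨fun h => iSup₂_le fun i j => ENNReal.div_le_of_le_mul (h _ _), fun h x y => ?_⟩
  have hclosed : IsClosed {q : X × X | edist (g q.1) (g q.2) ≤ K * edist q.1 q.2} :=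
    isClosed_le (by fun_prop) ((ENNReal.continuous_const_mul ENNReal.coe_ne_top).comp
      continuous_edist)
  refine he.induction_on₂ hclosed (fun i j => ?_) x y
  exact (ENNReal.div_le_iff_le_mul (Or.inr ENNReal.coe_ne_top) (Or.inl (edist_ne_top _ _))).mp
    ((le_iSup₂ (f := fun i j => edist (g (e i)) (g (e j)) / edist (e i) (e j)) i j).trans h)

theorem lipschitzWith_of_ae_norm_deriv_le {E : Type*} [NormedAddCommGroup E] [NormedSpace ℝ E]
    [CompleteSpace E] {g : ℝ → E} {K : ℝ≥0} (hg : Differentiable ℝ g)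
    (hK : ∀ᵐ x, ‖deriv g x‖ ≤ K) : LipschitzWith K g := by
  refine LipschitzWith.of_dist_le_mul fun x y => ?_
  have hint : IntervalIntegrable (deriv g) volume y x :=
    (intervalIntegrable_const (c := (K : ℝ))).mono_fun' (aestronglyMeasurable_deriv g _)
      (ae_restrict_of_ae hK)
  rw [dist_eq_norm, ← intervalIntegral.integral_eq_sub_of_hasDerivAt
    (fun x _ => (hg x).hasDerivAt) hint, Real.dist_eq]
  exact intervalIntegral.norm_integral_le_of_norm_le_const_ae (hK.mono fun x hx _ => hx)

theorem eLpNormEssSup_fderiv_eq_iSup_comp_denseRange {ι E : Type*}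
    [NormedAddCommGroup E] [NormedSpace ℝ E] [CompleteSpace E] {g : ℝ → E}
    (hg : Differentiable ℝ g) {e : ι → ℝ} (he : DenseRange e) :
    eLpNormEssSup (fderiv ℝ g) volume =
      ⨆ i, ⨆ j, edist (g (e i)) (g (e j)) / edist (e i) (e j) := by
  have hlip := fun K => lipschitzWith_iff_iSup_edist_div_le (K := K) hg.continuous he
  apply le_antisymm
  · set L := ⨆ i, ⨆ j, edist (g (e i)) (g (e j)) / edist (e i) (e j)
    rcases eq_or_ne L ⊤ with hL | hL
    · exact hL ▸ le_top
    have hgL : LipschitzWith L.toNNReal g := (hlip _).2 (ENNReal.coe_toNNReal hL).ge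
    refine eLpNormEssSup_le_of_ae_enorm_bound (Eventually.of_forall fun x => ?_)
    rw [← ENNReal.coe_toNNReal hL, ← ofReal_norm,
      ENNReal.ofReal_le_iff_le_toReal ENNReal.coe_ne_top]
    exact norm_fderiv_le_of_lipschitz ℝ hgL
  · set C := eLpNormEssSup (fderiv ℝ g) volume
    rcases eq_or_ne C ⊤ with hC | hC
    · exact hC ▸ le_top
    have hderiv : ∀ᵐ x, ‖deriv g x‖ ≤ C.toNNReal := by
      filter_upwards [enorm_ae_le_eLpNormEssSup (fderiv ℝ g) volume] with x hx
      rw [norm_deriv_eq_norm_fderiv, ← toReal_enorm]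
      exact ENNReal.toReal_mono hC hx
    exact ((hlip _).1 (lipschitzWith_of_ae_norm_deriv_le hg hderiv)).trans
      (ENNReal.coe_toNNReal hC).le

theorem Differentiable.W1NormR_top_eq_iSup_rat {g : ℝ → ℂ} (hg : Differentiable ℝ g) :
    W1NormR ⊤ g = (⨆ q : ℚ, ‖g q‖ₑ) + ⨆ p : ℚ, ⨆ q : ℚ, edist (g p) (g q) / edist (p : ℝ) q := by
  rw [W1NormR, eLpNorm_exponent_top, eLpNorm_exponent_top,
    hg.continuous.eLpNormEssSup_eq_iSup_comp_denseRange Rat.denseRange_cast,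
    eLpNormEssSup_fderiv_eq_iSup_comp_denseRange hg Rat.denseRange_cast]

theorem aemeasurable_W1NormR_top {α : Type*} [MeasurableSpace α] {μ : Measure α}
    {z : α → ℝ → ℂ} (hz : Measurable (Function.uncurry z))
    (hdiff : ∀ᵐ t ∂μ, Differentiable ℝ (z t)) :
    AEMeasurable (fun t => W1NormR ⊤ (z t)) μ := by
  refine (Measurable.aemeasurable ?_).congr
    (hdiff.mono fun t ht => ht.W1NormR_top_eq_iSup_rat.symm)
  have hzq (q : ℚ) : Measurable fun t => z t q := hz.of_uncurry_right
  exact (Measurable.iSup fun q => (hzq q).enorm).add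
    (Measurable.iSup fun p => Measurable.iSup fun q => ((hzq p).edist (hzq q)).div_const _)

theorem lintegral_le_lintegral_rpow_mul_measure_univ {α : Type*} [MeasurableSpace α]
    {μ : Measure α} {G : α → ℝ≥0∞} (hG : AEMeasurable G μ) {q : ℝ} (hq : 1 ≤ q) :
    ∫⁻ a, G a ∂μ ≤ (∫⁻ a, G a ^ q ∂μ) ^ (1 / q) * μ Set.univ ^ (1 - 1 / q) := by
  simpa [eLpNorm'_eq_lintegral_enorm] using
    eLpNorm'_le_eLpNorm'_mul_rpow_measure_univ one_pos hq hG.aestronglyMeasurable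

theorem norm_fderiv_conj (f : ℝ → ℂ) (x : ℝ) :
    ‖fderiv ℝ (fun ξ => (starRingEnd ℂ) (f ξ)) x‖ = ‖fderiv ℝ f x‖ := by
  have h := Complex.conjLIE.comp_fderiv (f := f) (x := x)
  simp only [Function.comp_def, Complex.conjLIE_apply] at h
  rw [h]
  exact Complex.conjLIE.toLinearIsometry.norm_toContinuousLinearMap_comp

theorem W1NormR_two_mul_le {u v : ℝ → ℂ} (hu : Differentiable ℝ u) (hv : Differentiable ℝ v) :
    W1NormR 2 (fun ξ => u ξ * v ξ) ≤
      W1NormR ⊤ u * eLpNorm v 2 volume + eLpNorm (fderiv ℝ v) ⊤ volume * eLpNorm u 2 volume := by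
  have hum : AEStronglyMeasurable u volume := hu.continuous.measurable.aestronglyMeasurable
  have hvm : AEStronglyMeasurable v volume := hv.continuous.measurable.aestronglyMeasurable
  have hL2 : eLpNorm (fun ξ => u ξ * v ξ) 2 volume ≤ eLpNorm u ⊤ volume * eLpNorm v 2 volume := by
    have h := eLpNorm_smul_le_eLpNorm_top_mul_eLpNorm 2 hvm u
    rwa [show u • v = fun ξ => u ξ * v ξ from rfl] at h
  have hleibniz : fderiv ℝ (fun ξ => u ξ * v ξ) = u • fderiv ℝ v + v • fderiv ℝ u :=
    funext fun x => fderiv_mul (hu x) (hv x)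
  have hD : eLpNorm (fderiv ℝ fun ξ => u ξ * v ξ) 2 volume ≤
      eLpNorm u 2 volume * eLpNorm (fderiv ℝ v) ⊤ volume +
        eLpNorm v 2 volume * eLpNorm (fderiv ℝ u) ⊤ volume := by
    have htri := eLpNorm_add_le (hum.smul (measurable_fderiv ℝ v).aestronglyMeasurable)
      (hvm.smul (measurable_fderiv ℝ u).aestronglyMeasurable) (p := 2) (by norm_num)
    have hu2 := eLpNorm_smul_le_eLpNorm_mul_eLpNorm_top 2 (fderiv ℝ v) hum
    have hv2 := eLpNorm_smul_le_eLpNorm_mul_eLpNorm_top 2 (fderiv ℝ u) hvm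
    rw [hleibniz]
    exact htri.trans (add_le_add hu2 hv2)
  calc W1NormR 2 (fun ξ => u ξ * v ξ)
      ≤ eLpNorm u ⊤ volume * eLpNorm v 2 volume +
          (eLpNorm u 2 volume * eLpNorm (fderiv ℝ v) ⊤ volume +
            eLpNorm v 2 volume * eLpNorm (fderiv ℝ u) ⊤ volume) := add_le_add hL2 hD
    _ = _ := by rw [W1NormR]; ring

theorem W1NormR_two_mul_conj_le {f g : ℝ → ℂ} (hf : Differentiable ℝ f) (hg : Differentiable ℝ g) :
    W1NormR 2 (fun ξ => g ξ * (starRingEnd ℂ) (f ξ)) ≤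
      W1NormR ⊤ g * eLpNorm f 2 volume + W1NormR ⊤ f * eLpNorm g 2 volume := by
  have hconj : eLpNorm (fun ξ => (starRingEnd ℂ) (f ξ)) 2 volume = eLpNorm f 2 volume :=
    eLpNorm_congr_norm_ae (Eventually.of_forall fun ξ => Complex.norm_conj (f ξ))
  have hconj' : eLpNorm (fderiv ℝ fun ξ => (starRingEnd ℂ) (f ξ)) ⊤ volume =
      eLpNorm (fderiv ℝ f) ⊤ volume :=
    eLpNorm_congr_norm_ae (Eventually.of_forall (norm_fderiv_conj f))
  refine (W1NormR_two_mul_le (v := fun ξ => (starRingEnd ℂ) (f ξ)) hg hf.star).trans ?_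
  rw [hconj, hconj']
  gcongr
  exact le_add_self

theorem persistence_estimate_d1_general (a b : ℝ) (y z : ℝ → ℝ → ℂ)
    (hy : Measurable (Function.uncurry y)) (hz : Measurable (Function.uncurry z))
    (hdiff : ∀ᵐ t ∂((volume : Measure ℝ).restrict (Set.Icc a b)),
      Differentiable ℝ (y t) ∧ Differentiable ℝ (z t)) :
    (∫⁻ t in Set.Icc a b, W1NormR 2 (fun ξ => z t ξ * (starRingEnd ℂ) (y t ξ)))
      ≤ ENNReal.ofReal (b - a) ^ ((3 : ℝ) / 4)
          * (2 * (∫⁻ t in Set.Icc a b, W1NormR ⊤ (z t) ^ ((4 : ℝ))) ^ ((1 : ℝ) / 4)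
                * essSup (fun t => eLpNorm (y t) 2 (volume : Measure ℝ))
                    ((volume : Measure ℝ).restrict (Set.Icc a b))
              + (∫⁻ t in Set.Icc a b, W1NormR ⊤ (y t) ^ ((4 : ℝ))) ^ ((1 : ℝ) / 4)
                * essSup (fun t => eLpNorm (z t) 2 (volume : Measure ℝ))
                    ((volume : Measure ℝ).restrict (Set.Icc a b))) := by
  set μI := (volume : Measure ℝ).restrict (Set.Icc a b)
  set Cy := essSup (fun t => eLpNorm (y t) 2 volume) μI
  set Cz := essSup (fun t => eLpNorm (z t) 2 volume) μI
  have hWy := aemeasurable_W1NormR_top hy (hdiff.mono fun _ h => h.1)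
  have hWz := aemeasurable_W1NormR_top hz (hdiff.mono fun _ h => h.2)
  have hpointwise : ∀ᵐ t ∂μI, W1NormR 2 (fun ξ => z t ξ * (starRingEnd ℂ) (y t ξ)) ≤
      W1NormR ⊤ (z t) * Cy + W1NormR ⊤ (y t) * Cz := by
    filter_upwards [hdiff, ENNReal.ae_le_essSup (fun t => eLpNorm (y t) 2 volume),
      ENNReal.ae_le_essSup (fun t => eLpNorm (z t) 2 volume)] with t ⟨hyt, hzt⟩ hyC hzC
    exact (W1NormR_two_mul_conj_le hyt hzt).trans (by gcongr)
  set M := ENNReal.ofReal (b - a) ^ ((3 : ℝ) / 4)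
  have hholder {G : ℝ → ℝ≥0∞} (hG : AEMeasurable G μI) :
      ∫⁻ t, G t ∂μI ≤ (∫⁻ t, G t ^ (4 : ℝ) ∂μI) ^ ((1 : ℝ) / 4) * M := by
    have h := lintegral_le_lintegral_rpow_mul_measure_univ hG (q := 4) (by norm_num)
    rwa [Measure.restrict_apply_univ, Real.volume_Icc, show (1 : ℝ) - 1 / 4 = 3 / 4 by norm_num]
      at h
  set Nz := (∫⁻ t, W1NormR ⊤ (z t) ^ (4 : ℝ) ∂μI) ^ ((1 : ℝ) / 4)
  set Ny := (∫⁻ t, W1NormR ⊤ (y t) ^ (4 : ℝ) ∂μI) ^ ((1 : ℝ) / 4)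
  calc ∫⁻ t, W1NormR 2 (fun ξ => z t ξ * (starRingEnd ℂ) (y t ξ)) ∂μI
      ≤ ∫⁻ t, (W1NormR ⊤ (z t) * Cy + W1NormR ⊤ (y t) * Cz) ∂μI := lintegral_mono_ae hpointwise
    _ = (∫⁻ t, W1NormR ⊤ (z t) ∂μI) * Cy + (∫⁻ t, W1NormR ⊤ (y t) ∂μI) * Cz := by
      rw [lintegral_add_left' (hWz.mul_const _), lintegral_mul_const'' _ hWz,
        lintegral_mul_const'' _ hWy]
    _ ≤ Nz * M * Cy + Ny * M * Cz := by grw [hholder hWz, hholder hWy]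
    _ = M * (Nz * Cy + Ny * Cz) := by ring
    _ ≤ M * (2 * Nz * Cy + Ny * Cz) := by
      gcongr
      exact le_mul_of_one_le_left' one_le_two

/-- Persistence-of-regularity estimate in `d = 1` on an interval `I = [a,b]`:
`∫_I ‖z(t) conj(y(t))‖_{W^{1,2}} dt ≤ (b−a)^{3/4} ·
 ( 2 (∫_I ‖z(t)‖_{W^{1,∞}}⁴ dt)^{1/4} · ess sup_{t∈I} ‖y(t)‖_{L²}
   + (∫_I ‖y(t)‖_{W^{1,∞}}⁴ dt)^{1/4} · ess sup_{t∈I} ‖z(t)‖_{L²} )`. -/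
theorem persistence_estimate_d1 (a b : ℝ) (hab : a < b) (y z : ℝ → ℝ → ℂ)
    (hy : Measurable (Function.uncurry y)) (hz : Measurable (Function.uncurry z))
    (hdiff : ∀ᵐ t ∂((volume : Measure ℝ).restrict (Set.Icc a b)),
      Differentiable ℝ (y t) ∧ Differentiable ℝ (z t)) :
    (∫⁻ t in Set.Icc a b, W1NormR 2 (fun ξ => z t ξ * (starRingEnd ℂ) (y t ξ)))
      ≤ ENNReal.ofReal (b - a) ^ ((3 : ℝ) / 4)
          * (2 * (∫⁻ t in Set.Icc a b, W1NormR ⊤ (z t) ^ ((4 : ℝ))) ^ ((1 : ℝ) / 4)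
                * essSup (fun t => eLpNorm (y t) 2 (volume : Measure ℝ))
                    ((volume : Measure ℝ).restrict (Set.Icc a b))
              + (∫⁻ t in Set.Icc a b, W1NormR ⊤ (y t) ^ ((4 : ℝ))) ^ ((1 : ℝ) / 4)
                * essSup (fun t => eLpNorm (z t) 2 (volume : Measure ℝ))
                    ((volume : Measure ℝ).restrict (Set.Icc a b))) :=
  persistence_estimate_d1_general a b y z hy hz hdiff
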